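/- arXiv:1604.01227 — 3 statements merged into one kernel-verified Lean document; each statement's English description precedes it below -/
import Mathlib

section
/- Let Δ > 0 and let x ∈ ℝ be fixed. The map ξ ↦ Q_Δ(x + ξ) − ξ − x, defined on the interval [−Δ/2, Δ/2], pushes the uniform probability measure on [−Δ/2, Δ/2] forward to the uniform probability measure on [−Δ/2, Δ/2]. -/
open MeasureTheory

/-- The uniform quantizer with step size `Δ`: `Q_Δ(x) = Δ·⌊x/Δ + 1/2⌋`. -/
noncomputable def uniformQuantizer (Δ : ℝ) (x : ℝ) : ℝ := Δ * ⌊x / Δ + 1 / 2⌋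

/-- The uniform probability measure on the interval `[-Δ/2, Δ/2]`. -/
noncomputable def uniformDitherMeasure (Δ : ℝ) : Measure ℝ :=
  (ENNReal.ofReal Δ)⁻¹ • volume.restrict (Set.Icc (-(Δ / 2)) (Δ / 2))

/-- For fixed `x`, the map `ξ ↦ Q_Δ(x + ξ) − ξ − x` pushes the uniform probability
measure on `[-Δ/2, Δ/2]` forward to itself. -/
theorem stmt_0 (Δ x : ℝ) (hΔ : 0 < Δ) :
    Measure.map (fun ξ : ℝ => uniformQuantizer Δ (x + ξ) - ξ - x)
      (uniformDitherMeasure Δ) = uniformDitherMeasure Δ := by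
  classical
  set f : ℝ → ℝ := fun ξ => uniformQuantizer Δ (x + ξ) - ξ - x with hfdef
  obtain ⟨n, hn⟩ : ∃ n : ℤ, n = ⌊x / Δ⌋ := ⟨_, rfl⟩
  have hnx : (n : ℝ) ≤ x / Δ := hn ▸ Int.floor_le _
  have hnx' : x / Δ < (n : ℝ) + 1 := by rw [hn]; exact Int.lt_floor_add_one _
  have hΔn : Δ * (n : ℝ) ≤ x := by
    have := mul_le_mul_of_nonneg_left hnx hΔ.le
    rwa [mul_div_cancel₀ _ hΔ.ne'] at this
  have hΔn' : x < Δ * ((n : ℝ) + 1) := by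
    have := mul_lt_mul_of_pos_left hnx' hΔ
    rwa [mul_div_cancel₀ _ hΔ.ne'] at this
  set t : ℝ := Δ * ((n : ℝ) + 1 / 2) - x with ht
  set c₁ : ℝ := Δ * (n : ℝ) - x with hc₁
  set c₂ : ℝ := Δ * ((n : ℝ) + 1) - x with hc₂
  have ht1 : -(Δ / 2) < t := by rw [ht]; nlinarith
  have ht2 : t ≤ Δ / 2 := by rw [ht]; nlinarith
  -- floor values on the two pieces
  have hfloor₁ : ∀ ξ ∈ Set.Ico (-(Δ / 2)) t, f ξ = c₁ - ξ := by
    intro ξ hξ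
    obtain ⟨h1, h2⟩ := hξ
    rw [ht] at h2
    have hfl : ⌊(x + ξ) / Δ + 1 / 2⌋ = n := by
      rw [Int.floor_eq_iff]
      constructor
      · rw [div_add' _ _ _ hΔ.ne', le_div_iff₀ hΔ]; nlinarith
      · rw [div_add' _ _ _ hΔ.ne', div_lt_iff₀ hΔ]; nlinarith
    simp only [hfdef, uniformQuantizer, hfl, hc₁]
    ring
  have hfloor₂ : ∀ ξ ∈ Set.Icc t (Δ / 2), f ξ = c₂ - ξ := by
    intro ξ hξ
    obtain ⟨h1, h2⟩ := hξ
    rw [ht] at h1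
    have hfl : ⌊(x + ξ) / Δ + 1 / 2⌋ = n + 1 := by
      rw [Int.floor_eq_iff]
      constructor
      · rw [div_add' _ _ _ hΔ.ne', le_div_iff₀ hΔ]; push_cast; nlinarith
      · rw [div_add' _ _ _ hΔ.ne', div_lt_iff₀ hΔ]; push_cast; nlinarith
    simp only [hfdef, uniformQuantizer, hfl, hc₂]
    push_cast
    ring
  -- measurability of f
  have hf : Measurable f := by
    rw [hfdef]
    unfold uniformQuantizer
    have h0 : Measurable fun ξ : ℝ => (x + ξ) / Δ + 1 / 2 := by fun_prop
    have h1 : Measurable fun ξ : ℝ => ((⌊(x + ξ) / Δ + 1 / 2⌋ : ℤ) : ℝ) :=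
      measurable_from_top.comp h0.floor
    exact ((measurable_const.mul h1).sub measurable_id).sub measurable_const
  have hg₁ : Measurable (fun ξ : ℝ => c₁ - ξ) := by fun_prop
  have hg₂ : Measurable (fun ξ : ℝ => c₂ - ξ) := by fun_prop
  -- preimage computations
  have hpre₁ : (fun ξ : ℝ => c₁ - ξ) ⁻¹' Set.Ioc (-(Δ / 2)) t = Set.Ico (-(Δ / 2)) t := by
    ext ξ
    simp only [Set.mem_preimage, Set.mem_Ioc, Set.mem_Ico, hc₁, ht]
    constructor
    · rintro ⟨a1, a2⟩; exact ⟨by linarith, by linarith⟩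
    · rintro ⟨a1, a2⟩; exact ⟨by linarith, by linarith⟩
  have hpre₂ : (fun ξ : ℝ => c₂ - ξ) ⁻¹' Set.Icc t (Δ / 2) = Set.Icc t (Δ / 2) := by
    ext ξ
    simp only [Set.mem_preimage, Set.mem_Icc, hc₂, ht]
    constructor
    · rintro ⟨a1, a2⟩; exact ⟨by linarith, by linarith⟩
    · rintro ⟨a1, a2⟩; exact ⟨by linarith, by linarith⟩
  -- main computation on the Lebesgue restriction
  have key : Measure.map f (volume.restrict (Set.Icc (-(Δ / 2)) (Δ / 2)))
      = volume.restrict (Set.Icc (-(Δ / 2)) (Δ / 2)) := by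
    have hsplit : Set.Ico (-(Δ / 2)) t ∪ Set.Icc t (Δ / 2) = Set.Icc (-(Δ / 2)) (Δ / 2) :=
      Set.Ico_union_Icc_eq_Icc ht1.le ht2
    have hdisj : Disjoint (Set.Ico (-(Δ / 2)) t) (Set.Icc t (Δ / 2)) := by
      apply Set.disjoint_left.2
      rintro ξ ⟨_, h2⟩ ⟨h3, _⟩
      exact absurd h3 (not_le.2 h2)
    have hrestr : volume.restrict (Set.Icc (-(Δ / 2)) (Δ / 2))
        = volume.restrict (Set.Ico (-(Δ / 2)) t) + volume.restrict (Set.Icc t (Δ / 2)) := by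
      rw [← hsplit, Measure.restrict_union hdisj measurableSet_Icc]
    have hm₁ : Measure.map f (volume.restrict (Set.Ico (-(Δ / 2)) t))
        = volume.restrict (Set.Ioc (-(Δ / 2)) t) := by
      have heq : Measure.map f (volume.restrict (Set.Ico (-(Δ / 2)) t))
          = Measure.map (fun ξ : ℝ => c₁ - ξ) (volume.restrict (Set.Ico (-(Δ / 2)) t)) :=
        Measure.map_congr
          (Filter.eventuallyEq_of_mem (self_mem_ae_restrict measurableSet_Ico) hfloor₁)
      rw [heq, ← hpre₁, ← Measure.restrict_map hg₁ measurableSet_Ioc,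
        (Measure.measurePreserving_sub_left volume c₁).map_eq]
    have hm₂ : Measure.map f (volume.restrict (Set.Icc t (Δ / 2)))
        = volume.restrict (Set.Icc t (Δ / 2)) := by
      have heq : Measure.map f (volume.restrict (Set.Icc t (Δ / 2)))
          = Measure.map (fun ξ : ℝ => c₂ - ξ) (volume.restrict (Set.Icc t (Δ / 2))) :=
        Measure.map_congr
          (Filter.eventuallyEq_of_mem (self_mem_ae_restrict measurableSet_Icc) hfloor₂)
      rw [heq]
      conv_lhs => rw [← hpre₂]
      rw [← Measure.restrict_map hg₂ measurableSet_Icc,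
        (Measure.measurePreserving_sub_left volume c₂).map_eq]
    rw [hrestr, Measure.map_add _ _ hf, hm₁, hm₂]
    congr 1
    exact (Measure.restrict_congr_set Ico_ae_eq_Ioc).symm
  rw [show uniformDitherMeasure Δ
      = (ENNReal.ofReal Δ)⁻¹ • volume.restrict (Set.Icc (-(Δ / 2)) (Δ / 2)) from rfl,
    Measure.map_smul, key]
end

section
/- Let Δ > 0, let X be a real-valued random variable, and let ξ be a random variable uniformly distributed on [−Δ/2, Δ/2] and independent of X. Define the quantization error η = Q_Δ(X + ξ) − ξ − X. Then η is uniformly distributed on [−Δ/2, Δ/2] and η is independent of X. -/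
open MeasureTheory ProbabilityTheory

open Set Function


noncomputable def qErr (Δ t : ℝ) : ℝ := uniformQuantizer Δ t - t

lemma qErr_measurable (Δ : ℝ) : Measurable (qErr Δ) := by
  unfold qErr uniformQuantizer
  have h1 : Measurable fun t : ℝ => ((⌊t / Δ + 1 / 2⌋ : ℤ) : ℝ) :=
    measurable_from_top.comp (((measurable_id.div_const Δ).add_const _).floor)
  exact (measurable_const.mul h1).sub measurable_id

lemma qErr_periodic (Δ : ℝ) (hΔ : 0 < Δ) : Function.Periodic (qErr Δ) Δ := by
  intro t
  unfold qErr uniformQuantizer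
  have h : (t + Δ) / Δ + 1 / 2 = (t / Δ + 1 / 2) + 1 := by field_simp; ring
  rw [h, Int.floor_add_one]
  push_cast
  ring

lemma qErr_eq_neg (Δ : ℝ) (hΔ : 0 < Δ) {t : ℝ} (ht : t ∈ Set.Ioo (-(Δ/2)) (Δ/2)) :
    qErr Δ t = -t := by
  unfold qErr uniformQuantizer
  have h0 : ⌊t / Δ + 1 / 2⌋ = 0 := by
    rw [Int.floor_eq_zero_iff]
    constructor
    · have := ht.1
      have : -(1/2 : ℝ) ≤ t / Δ := by
        rw [le_div_iff₀ hΔ]; nlinarith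
      simpa using by linarith
    · have := ht.2
      have : t / Δ < 1/2 := by
        rw [div_lt_iff₀ hΔ]; nlinarith
      simpa using by linarith
  rw [h0]
  push_cast
  ring

lemma qErr_lift (Δ : ℝ) [hF : Fact (0 < Δ)] (t : ℝ) :
    AddCircle.liftIoc Δ (-(Δ/2)) (qErr Δ) (t : AddCircle Δ) = qErr Δ t := by
  have hΔ : 0 < Δ := hF.out
  obtain ⟨n, hn⟩ := (existsUnique_add_zsmul_mem_Ioc hΔ t (-(Δ/2))).exists
  have hcoe : ((t + n • Δ : ℝ) : AddCircle Δ) = (t : AddCircle Δ) := by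
    have : ((n • Δ : ℝ) : AddCircle Δ) = 0 := by
      rw [AddCircle.coe_zsmul, AddCircle.coe_period, smul_zero]
    rw [AddCircle.coe_add, this, add_zero]
  have hval : qErr Δ (t + n • Δ) = qErr Δ t := ((qErr_periodic Δ hΔ).zsmul n) t
  rw [← hcoe, AddCircle.liftIoc_coe_apply hn, hval]

lemma liftIoc_measurable (Δ a : ℝ) [Fact (0 < Δ)] {f : ℝ → ℝ} (hf : Measurable f) :
    Measurable (AddCircle.liftIoc Δ a f) := by
  have : AddCircle.liftIoc Δ a f =
      (Set.Ioc a (a + Δ)).restrict f ∘ (AddCircle.measurableEquivIoc Δ a) := rfl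
  rw [this]
  exact (hf.comp measurable_subtype_coe).comp (AddCircle.measurableEquivIoc Δ a).measurable

lemma map_qErr_Ioc (Δ : ℝ) [hF : Fact (0 < Δ)] (c : ℝ) :
    Measure.map (qErr Δ) (volume.restrict (Set.Ioc c (c + Δ)))
      = volume.restrict (Set.Icc (-(Δ/2)) (Δ/2)) := by
  have hΔ : 0 < Δ := hF.out
  set g := AddCircle.liftIoc Δ (-(Δ/2)) (qErr Δ) with hg
  have hgm : Measurable g := liftIoc_measurable Δ _ (qErr_measurable Δ)
  have hcomp : qErr Δ = g ∘ (fun t : ℝ => (t : AddCircle Δ)) := by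
    funext t; exact (qErr_lift Δ t).symm
  have key : ∀ c : ℝ, Measure.map (qErr Δ) (volume.restrict (Set.Ioc c (c + Δ)))
      = Measure.map g (volume : Measure (AddCircle Δ)) := by
    intro c
    rw [hcomp, ← Measure.map_map hgm AddCircle.measurable_mk',
      (AddCircle.measurePreserving_mk Δ c).map_eq]
  have h2 : (-(Δ/2)) + Δ = Δ/2 := by ring
  rw [key c, ← key (-(Δ/2)), h2]
  -- now reduce Ioc (-(Δ/2)) (Δ/2) to Ioo, where qErr = neg
  have hae : volume.restrict (Set.Ioc (-(Δ/2)) (Δ/2))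
      = volume.restrict (Set.Ioo (-(Δ/2)) (Δ/2)) :=
    (Measure.restrict_congr_set Ioo_ae_eq_Ioc).symm
  rw [hae]
  have hmapcongr : Measure.map (qErr Δ) (volume.restrict (Set.Ioo (-(Δ/2)) (Δ/2)))
      = Measure.map Neg.neg (volume.restrict (Set.Ioo (-(Δ/2)) (Δ/2))) := by
    apply Measure.map_congr
    filter_upwards [ae_restrict_mem measurableSet_Ioo] with t ht
    exact qErr_eq_neg Δ hΔ ht
  rw [hmapcongr]
  have hpre : (Neg.neg : ℝ → ℝ) ⁻¹' (Set.Ioo (-(Δ/2)) (Δ/2)) = Set.Ioo (-(Δ/2)) (Δ/2) := by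
    ext x
    simp only [Set.mem_preimage, Set.mem_Ioo]
    constructor <;> (rintro ⟨h1, h2⟩; exact ⟨by linarith, by linarith⟩)
  have : Measure.map Neg.neg (volume.restrict (Set.Ioo (-(Δ/2)) (Δ/2)))
      = (Measure.map Neg.neg volume).restrict (Set.Ioo (-(Δ/2)) (Δ/2)) := by
    rw [Measure.restrict_map measurable_neg measurableSet_Ioo, hpre]
  rw [this, Measure.map_neg_eq_self (volume : Measure ℝ),
    Measure.restrict_congr_set Ioo_ae_eq_Icc]

lemma map_qErr_shift (Δ : ℝ) [hF : Fact (0 < Δ)] (x : ℝ) :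
    Measure.map (fun t => qErr Δ (x + t)) (uniformDitherMeasure Δ)
      = uniformDitherMeasure Δ := by
  have hΔ : 0 < Δ := hF.out
  unfold uniformDitherMeasure
  rw [Measure.map_smul]
  congr 1
  have hIcc : volume.restrict (Set.Icc (-(Δ/2)) (Δ/2))
      = volume.restrict (Set.Ioc (-(Δ/2)) (Δ/2)) :=
    (Measure.restrict_congr_set Ioc_ae_eq_Icc).symm
  rw [hIcc]
  have hcomp : (fun t => qErr Δ (x + t)) = qErr Δ ∘ (fun t => x + t) := rfl
  have hshift : Measure.map (fun t : ℝ => x + t) (volume.restrict (Set.Ioc (-(Δ/2)) (Δ/2)))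
      = volume.restrict (Set.Ioc (x + -(Δ/2)) (x + -(Δ/2) + Δ)) := by
    have hpre : (fun t : ℝ => x + t) ⁻¹' (Set.Ioc (x + -(Δ/2)) (x + -(Δ/2) + Δ))
        = Set.Ioc (-(Δ/2)) (Δ/2) := by
      ext u
      simp only [Set.mem_preimage, Set.mem_Ioc]
      constructor <;> (rintro ⟨h1, h2⟩; exact ⟨by linarith, by linarith⟩)
    have h := Measure.restrict_map (μ := (volume : Measure ℝ))
      (measurable_const_add x) (measurableSet_Ioc (a := x + -(Δ/2)) (b := x + -(Δ/2) + Δ))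
    rw [map_add_left_eq_self (μ := (volume : Measure ℝ)) x, hpre] at h
    exact h.symm
  rw [hcomp, ← Measure.map_map (qErr_measurable Δ) (measurable_const_add x), hshift,
    map_qErr_Ioc Δ (x + -(Δ/2)), ← hIcc]

/-- If `ξ` is uniform on `[-Δ/2, Δ/2]` and independent of `X`, then the quantization
error `η = Q_Δ(X + ξ) − ξ − X` of the dithered quantizer is uniform on `[-Δ/2, Δ/2]`
and independent of `X`. -/
theorem stmt_1 {Ω : Type*} [MeasurableSpace Ω] (P : Measure Ω) [IsProbabilityMeasure P]
    (Δ : ℝ) (hΔ : 0 < Δ) (X ξ : Ω → ℝ) (hX : Measurable X) (hξ : Measurable ξ)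
    (hindep : IndepFun X ξ P)
    (hunif : Measure.map ξ P = uniformDitherMeasure Δ) :
    Measure.map (fun ω => uniformQuantizer Δ (X ω + ξ ω) - ξ ω - X ω) P
        = uniformDitherMeasure Δ ∧
      IndepFun (fun ω => uniformQuantizer Δ (X ω + ξ ω) - ξ ω - X ω) X P := by
  haveI : Fact (0 < Δ) := ⟨hΔ⟩
  set ν := uniformDitherMeasure Δ with hν
  haveI hνprob : IsProbabilityMeasure ν := hunif ▸ Measure.isProbabilityMeasure_map hξ.aemeasurable
  set μ := Measure.map X P with hμ
  haveI : IsProbabilityMeasure μ := Measure.isProbabilityMeasure_map hX.aemeasurable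
  set g : ℝ × ℝ → ℝ × ℝ := fun p => (qErr Δ (p.1 + p.2), p.1) with hgdef
  have hgm : Measurable g :=
    ((qErr_measurable Δ).comp (measurable_fst.add measurable_snd)).prodMk measurable_fst
  have hηfun : (fun ω => uniformQuantizer Δ (X ω + ξ ω) - ξ ω - X ω)
      = fun ω => qErr Δ (X ω + ξ ω) := by
    funext ω; simp only [qErr]; ring
  have hηm : Measurable fun ω => qErr Δ (X ω + ξ ω) := (qErr_measurable Δ).comp (hX.add hξ)
  have hjointXξ : Measure.map (fun ω => (X ω, ξ ω)) P = μ.prod ν := by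
    rw [(indepFun_iff_map_prod_eq_prod_map_map hX.aemeasurable hξ.aemeasurable).mp hindep,
      hunif]
  have hjoint : Measure.map (fun ω => (qErr Δ (X ω + ξ ω), X ω)) P = ν.prod μ := by
    have hcomp2 : (fun ω => (qErr Δ (X ω + ξ ω), X ω)) = g ∘ (fun ω => (X ω, ξ ω)) := rfl
    rw [hcomp2, ← Measure.map_map hgm (hX.prodMk hξ), hjointXξ]
    refine (Measure.prod_eq (μ := ν) (ν := μ) fun s t hs ht => ?_).symm
    rw [Measure.map_apply hgm (hs.prod ht), Measure.prod_apply (hgm (hs.prod ht))]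
    have hsec : ∀ x : ℝ, ν (Prod.mk x ⁻¹' (g ⁻¹' (s ×ˢ t))) = t.indicator (fun _ => ν s) x := by
      intro x
      by_cases hx : x ∈ t
      · rw [Set.indicator_of_mem hx]
        have hpre : Prod.mk x ⁻¹' (g ⁻¹' (s ×ˢ t)) = (fun u => qErr Δ (x + u)) ⁻¹' s := by
          ext u
          simp [hgdef, Set.mem_prod, hx]
        have hmx : Measurable fun u => qErr Δ (x + u) :=
          (qErr_measurable Δ).comp (measurable_const_add x)
        rw [hpre, ← Measure.map_apply hmx hs, map_qErr_shift Δ x]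
      · rw [Set.indicator_of_notMem hx]
        have hpre : Prod.mk x ⁻¹' (g ⁻¹' (s ×ˢ t)) = ∅ := by
          ext u; simp [hgdef, Set.mem_prod, hx]
        rw [hpre]; simp
    rw [lintegral_congr hsec, lintegral_indicator ht, setLIntegral_const]
  have hηlaw : Measure.map (fun ω => qErr Δ (X ω + ξ ω)) P = ν := by
    have hcomp3 : (fun ω => qErr Δ (X ω + ξ ω))
        = Prod.fst ∘ (fun ω => (qErr Δ (X ω + ξ ω), X ω)) := rfl
    rw [hcomp3, ← Measure.map_map measurable_fst (hηm.prodMk hX), hjoint,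
      Measure.map_fst_prod]
    simp
  constructor
  · rw [hηfun, hηlaw]
  · rw [hηfun]
    refine (indepFun_iff_map_prod_eq_prod_map_map hηm.aemeasurable hX.aemeasurable).mpr ?_
    rw [hjoint, hηlaw, ← hμ]
end

section
/- Let r ≥ 1, let Δ_1, …, Δ_r > 0, let X = (X_1, …, X_r) be an ℝ^r-valued random vector, and let ξ = (ξ_1, …, ξ_r) be an ℝ^r-valued random vector independent of X whose coordinates ξ_i are mutually independent with ξ_i uniformly distributed on [−Δ_i/2, Δ_i/2]. Define η_i = Q_{Δ_i}(X_i + ξ_i) − ξ_i − X_i for i = 1, …, r. Then the coordinates η_1, …, η_r are mutually independent, each η_i is uniformly distributed on [−Δ_i/2, Δ_i/2], and the random vector η = (η_1, …, η_r) is independent of X. -/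
open MeasureTheory ProbabilityTheory

/-!
For a fixed `x`, the quantization error `u ↦ Q_Δ(x + u) - u - x` is the reduction of `-(x + u)`
into `(-Δ/2, Δ/2]`, i.e. a reflection followed by a rotation of the circle `ℝ/Δℤ`; both preserve
the uniform law on `[-Δ/2, Δ/2]`. So for every value `x` of `X` the error vector is a
measure-preserving image of the dither `ξ`, whose law is the product of the uniform laws, and the
skew product `(x, u) ↦ (η(x, u), x)` carries `law X ⊗ law ξ` to `law ξ ⊗ law X`: this is at once
the law of `η`, the independence of its coordinates and the independence of `η` and `X`.
-/

open Set

@[fun_prop]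
lemma measurable_uniformQuantizer (Δ : ℝ) : Measurable (uniformQuantizer Δ) := by
  unfold uniformQuantizer
  fun_prop

lemma uniformQuantizer_sub_self {Δ : ℝ} (hΔ : 0 < Δ) (y : ℝ) :
    uniformQuantizer Δ y - y = toIocMod hΔ (-(Δ / 2)) (-y) := by
  have h : (-(Δ / 2) + Δ - -y) / Δ = y / Δ + 1 / 2 := by field_simp; ring
  rw [toIocMod, toIocDiv_eq_neg_floor, h, uniformQuantizer, neg_smul, zsmul_eq_mul]
  ring

lemma measurePreserving_toIocMod_add {T : ℝ} (hT : 0 < T) (a c : ℝ) :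
    MeasurePreserving (fun u => toIocMod hT a (c + u))
      (volume.restrict (Ioc a (a + T))) (volume.restrict (Ioc a (a + T))) := by
  have : Fact (0 < T) := ⟨hT⟩
  have hval : MeasurePreserving ((↑) : Ioc a (a + T) → ℝ)
      (Measure.comap Subtype.val volume) (volume.restrict (Ioc a (a + T))) :=
    ⟨measurable_subtype_coe, map_comap_subtype_coe measurableSet_Ioc _⟩
  have h := (hval.comp (AddCircle.measurePreserving_equivIoc T (a := a))).comp
    ((measurePreserving_add_left volume (c : AddCircle T)).comp
      (AddCircle.measurePreserving_mk T a))
  convert h using 1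
  funext u
  simp only [Function.comp_apply, ← AddCircle.coe_add]
  -- `equivIoc T a` is `toIocMod hT a` on representatives
  rfl

lemma uniformDitherMeasure_eq_restrict_Ioc (Δ : ℝ) :
    uniformDitherMeasure Δ
      = (ENNReal.ofReal Δ)⁻¹ • volume.restrict (Ioc (-(Δ / 2)) (-(Δ / 2) + Δ)) := by
  rw [uniformDitherMeasure, show -(Δ / 2) + Δ = Δ / 2 by ring,
    Measure.restrict_congr_set Ioc_ae_eq_Icc]

lemma isProbabilityMeasure_uniformDitherMeasure {Δ : ℝ} (hΔ : 0 < Δ) :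
    IsProbabilityMeasure (uniformDitherMeasure Δ) := by
  constructor
  rw [uniformDitherMeasure, Measure.smul_apply, Measure.restrict_apply_univ, Real.volume_Icc,
    show Δ / 2 - -(Δ / 2) = Δ by ring, smul_eq_mul,
    ENNReal.inv_mul_cancel (by simpa using hΔ) ENNReal.ofReal_ne_top]

lemma measurePreserving_neg_uniformDitherMeasure (Δ : ℝ) :
    MeasurePreserving Neg.neg (uniformDitherMeasure Δ) (uniformDitherMeasure Δ) := by
  refine ⟨measurable_neg, ?_⟩
  have hsymm : Icc (-(Δ / 2)) (Δ / 2) = Neg.neg ⁻¹' Icc (-(Δ / 2)) (Δ / 2) := by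
    rw [neg_preimage, neg_Icc, neg_neg]
  rw [uniformDitherMeasure, Measure.map_smul]
  nth_rw 1 [hsymm]
  rw [← Measure.restrict_map measurable_neg measurableSet_Icc, Measure.map_neg_eq_self]

lemma measurePreserving_uniformQuantizer_error {Δ : ℝ} (hΔ : 0 < Δ) (x : ℝ) :
    MeasurePreserving (fun u => uniformQuantizer Δ (x + u) - u - x)
      (uniformDitherMeasure Δ) (uniformDitherMeasure Δ) := by
  have hshift : MeasurePreserving (fun u => toIocMod hΔ (-(Δ / 2)) (-x + u))
      (uniformDitherMeasure Δ) (uniformDitherMeasure Δ) := by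
    rw [uniformDitherMeasure_eq_restrict_Ioc]
    exact (measurePreserving_toIocMod_add hΔ _ _).smul_measure _
  convert hshift.comp (measurePreserving_neg_uniformDitherMeasure Δ) using 1
  funext u
  rw [Function.comp_apply, ← neg_add, sub_sub, add_comm u x, uniformQuantizer_sub_self hΔ]

lemma ProbabilityTheory.IndepFun.indepFun_and_hasLaw_of_map_eq {Ω α β γ : Type*}
    [MeasurableSpace Ω] [MeasurableSpace α] [MeasurableSpace β] [MeasurableSpace γ]
    {P : Measure Ω} [IsProbabilityMeasure P] {X : Ω → α} {ξ : Ω → β} {ν : Measure β}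
    {ν' : Measure γ} (hindep : IndepFun X ξ P) (hX : AEMeasurable X P) (hξ : HasLaw ξ ν P)
    {g : α → β → γ} (hg : Measurable (Function.uncurry g))
    (hgν : ∀ᵐ x ∂P.map X, Measure.map (g x) ν = ν') :
    IndepFun (fun ω => g (X ω) (ξ ω)) X P ∧ HasLaw (fun ω => g (X ω) (ξ ω)) ν' P := by
  have : IsProbabilityMeasure (P.map X) := Measure.isProbabilityMeasure_map hX
  have : IsProbabilityMeasure ν := hξ.isProbabilityMeasure_iff.1 inferInstance
  have : IsProbabilityMeasure ν' := by
    obtain ⟨x, rfl⟩ := hgν.exists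
    exact Measure.isProbabilityMeasure_map hg.of_uncurry_left.aemeasurable
  have hXlaw : HasLaw X (P.map X) P := ⟨hX, rfl⟩
  have hpair : HasLaw (fun ω => (X ω, ξ ω)) ((P.map X).prod ν) P :=
    (indepFun_iff_hasLaw_prodMk_prod hXlaw hξ).1 hindep
  have hskew := (MeasurePreserving.id (P.map X)).skew_product hg hgν
  have hswapped : HasLaw (fun ω => (g (X ω) (ξ ω), X ω)) (ν'.prod (P.map X)) P :=
    (Measure.measurePreserving_swap.comp hskew).comp_hasLaw hpair
  have hη : HasLaw (fun ω => g (X ω) (ξ ω)) ν' P := measurePreserving_fst.comp_hasLaw hswapped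
  exact ⟨(indepFun_iff_hasLaw_prodMk_prod hη hXlaw).2 hswapped, hη⟩

theorem stmt_2_general {Ω : Type*} [MeasurableSpace Ω] (P : Measure Ω) [IsProbabilityMeasure P]
    (r : ℕ) (Δ : Fin r → ℝ) (hΔ : ∀ i, 0 < Δ i)
    (X ξ : Ω → Fin r → ℝ) (hX : Measurable X) (hξ : Measurable ξ)
    (hindep : IndepFun X ξ P)
    (hcoords : iIndepFun (fun i ω => ξ ω i) P)
    (hunif : ∀ i, Measure.map (fun ω => ξ ω i) P = uniformDitherMeasure (Δ i)) :
    iIndepFun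
        (fun i ω => uniformQuantizer (Δ i) (X ω i + ξ ω i) - ξ ω i - X ω i) P ∧
      (∀ i, Measure.map (fun ω => uniformQuantizer (Δ i) (X ω i + ξ ω i) - ξ ω i - X ω i) P
          = uniformDitherMeasure (Δ i)) ∧
      IndepFun (fun ω i => uniformQuantizer (Δ i) (X ω i + ξ ω i) - ξ ω i - X ω i) X P := by
  have := fun i => isProbabilityMeasure_uniformDitherMeasure (hΔ i)
  have hξlaw : HasLaw ξ (Measure.pi fun i => uniformDitherMeasure (Δ i)) P :=
    hcoords.hasLaw_pi fun i => ⟨hξ.eval.aemeasurable, hunif i⟩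
  have herror (x : Fin r → ℝ) := measurePreserving_pi _ _ fun i =>
    measurePreserving_uniformQuantizer_error (hΔ i) (x i)
  obtain ⟨hηX, hηlaw⟩ := hindep.indepFun_and_hasLaw_of_map_eq hX.aemeasurable hξlaw
    (by fun_prop) (ae_of_all _ fun x => (herror x).map_eq)
  have hηi (i : Fin r) := (measurePreserving_eval _ i).comp_hasLaw hηlaw
  exact ⟨(iIndepFun_iff_hasLaw_pi_pi hηi).2 hηlaw, fun i => (hηi i).map_eq, hηX⟩

/-- Coordinatewise dithered uniform quantization: if the dither vector `ξ` is independent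
of `X` and has mutually independent coordinates, `ξ i` being uniform on `[-Δ i/2, Δ i/2]`,
then the quantization errors `η i = Q_{Δ i}(X i + ξ i) − ξ i − X i` are mutually
independent, each `η i` is uniform on `[-Δ i/2, Δ i/2]`, and the error vector `η` is
independent of `X`. -/
theorem stmt_2 {Ω : Type*} [MeasurableSpace Ω] (P : Measure Ω) [IsProbabilityMeasure P]
    (r : ℕ) (hr : 1 ≤ r) (Δ : Fin r → ℝ) (hΔ : ∀ i, 0 < Δ i)
    (X ξ : Ω → Fin r → ℝ) (hX : Measurable X) (hξ : Measurable ξ)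
    (hindep : IndepFun X ξ P)
    (hcoords : iIndepFun (fun i ω => ξ ω i) P)
    (hunif : ∀ i, Measure.map (fun ω => ξ ω i) P = uniformDitherMeasure (Δ i)) :
    iIndepFun
        (fun i ω => uniformQuantizer (Δ i) (X ω i + ξ ω i) - ξ ω i - X ω i) P ∧
      (∀ i, Measure.map (fun ω => uniformQuantizer (Δ i) (X ω i + ξ ω i) - ξ ω i - X ω i) P
          = uniformDitherMeasure (Δ i)) ∧
      IndepFun (fun ω i => uniformQuantizer (Δ i) (X ω i + ξ ω i) - ξ ω i - X ω i) X P :=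
  stmt_2_general P r Δ hΔ X ξ hX hξ hindep hcoords hunif
end
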